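/- Let Λ = Z_p[[T]] and let M be a finitely generated torsion Λ-module. Then Ext^1_Λ(M, Λ) has no nonzero finite submodules, i.e., the maximal finite Λ-submodule of Ext^1_Λ(M, Λ) is zero. -/

import Mathlib

open CategoryTheory

/-- `Ext^n_Λ(M, Λ)` for `Λ = ℤ_p[[T]]`, as a `Λ`-module. -/
noncomputable def extIw (p : ℕ) [Fact p.Prime] (n : ℕ)
    (M : ModuleCat.{0} (PowerSeries ℤ_[p])) : ModuleCat (PowerSeries ℤ_[p]) :=
  ((Ext (PowerSeries ℤ_[p]) (ModuleCat.{0} (PowerSeries ℤ_[p])) n).obj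
    (Opposite.op M)).obj (ModuleCat.of _ (PowerSeries ℤ_[p]))

/-!
An element `y` of a finite submodule of `Ext¹(M, Λ)` is killed by some `p ^ k` and some `T ^ m`,
because `p` and `T` lie in the maximal ideal of the local ring `Λ`. Represent `y` by a cochain
`φ : P₁ → Λ` on a projective resolution `P₁ → P₀ → M`, so that `p ^ k • φ = ψ₁ ∘ d` and
`T ^ m • φ = ψ₂ ∘ d`. As `M = coker d` is torsion, `T ^ m • ψ₁ = p ^ k • ψ₂` on `P₀`; since `p ^ k`
divides `T ^ m * f` only if it divides `f`, this gives `ψ₁ = p ^ k • χ`, and then `φ = χ ∘ d` is a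
coboundary.
-/

universe u

open PowerSeries nonZeroDivisors

theorem exists_pow_smul_eq_zero_of_finite {R E : Type*} [CommRing R] [IsLocalRing R]
    [AddCommGroup E] [Module R E] [Finite E] {r : R} (hr : r ∈ nonunits R) (x : E) :
    ∃ k, r ^ k • x = 0 := by
  obtain ⟨i, j, hij, hfe⟩ := Finite.exists_ne_map_eq_of_infinite fun n : ℕ => r ^ n • x
  wlog hlt : i < j generalizing i j
  · exact this j i hij.symm hfe.symm (by omega)
  obtain ⟨d, rfl⟩ := Nat.exists_eq_add_of_lt hlt
  have hu : IsUnit (1 - r ^ (d + 1)) :=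
    IsLocalRing.isUnit_one_sub_self_of_mem_nonunits _ fun h => hr (isUnit_pow_succ_iff.mp h)
  refine ⟨i, (hu.smul_left_cancel).mp ?_⟩
  rw [smul_zero, sub_smul, one_smul, smul_smul, ← pow_add, add_comm, ← add_assoc, hfe, sub_self]

theorem PowerSeries.C_dvd_of_dvd_X_pow_mul {R : Type*} [CommRing R] {a : R} {f : PowerSeries R}
    (m : ℕ) (h : C a ∣ X ^ m * f) : C a ∣ f := by
  obtain ⟨g, hg⟩ := h
  have hcoeff (n : ℕ) : a ∣ coeff n f := by
    have := congrArg (coeff (n + m)) hg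
    rw [coeff_X_pow_mul, coeff_C_mul] at this
    exact ⟨_, this⟩
  choose c hc using hcoeff
  exact ⟨mk c, by ext n; rw [coeff_C_mul, coeff_mk, hc]⟩

section

variable {R A B : Type*} [CommRing R] [AddCommGroup A] [Module R A] [AddCommGroup B] [Module R B]

theorem LinearMap.exists_smul_eq_of_forall_dvd {s : R} (hs : s ∈ R⁰) (ψ : B →ₗ[R] R)
    (h : ∀ b, s ∣ ψ b) : ∃ χ : B →ₗ[R] R, s • χ = ψ := by
  choose c hc using h
  have hcancel {x y : R} : s * x = s * y → x = y := (mul_cancel_left_mem_nonZeroDivisors hs).mp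
  refine ⟨{ toFun := c, map_add' := ?_, map_smul' := ?_ }, LinearMap.ext fun b => (hc b).symm⟩
  · intro b₁ b₂
    exact hcancel (by rw [← hc, map_add, hc, hc, mul_add])
  · intro r b
    exact hcancel (by rw [← hc, map_smul, hc, smul_eq_mul, smul_eq_mul, RingHom.id_apply]; ring)

theorem LinearMap.exists_comp_eq_of_smul_comp_eq (d : A →ₗ[R] B)
    (hd : ∀ b, ∃ g ∈ R⁰, g • b ∈ LinearMap.range d) {s t : R} (hs : s ∈ R⁰)
    (hst : ∀ f, s ∣ t * f → s ∣ f) {φ : A →ₗ[R] R}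
    (h₁ : ∃ ψ : B →ₗ[R] R, ψ ∘ₗ d = s • φ) (h₂ : ∃ ψ : B →ₗ[R] R, ψ ∘ₗ d = t • φ) :
    ∃ χ : B →ₗ[R] R, χ ∘ₗ d = φ := by
  obtain ⟨ψ₁, hψ₁⟩ := h₁
  obtain ⟨ψ₂, hψ₂⟩ := h₂
  have hψ₁' (a : A) : ψ₁ (d a) = s * φ a := LinearMap.congr_fun hψ₁ a
  have hψ₂' (a : A) : ψ₂ (d a) = t * φ a := LinearMap.congr_fun hψ₂ a
  -- `t ψ₁ - s ψ₂` vanishes on the range of `d`, hence everywhere since the cokernel is torsion.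
  have hcross (b : B) : t * ψ₁ b = s * ψ₂ b := by
    obtain ⟨g, hg, a, ha⟩ := hd b
    refine (mul_cancel_left_mem_nonZeroDivisors hg).mp ?_
    calc g * (t * ψ₁ b) = t * ψ₁ (g • b) := by rw [map_smul, smul_eq_mul]; ring
      _ = s * ψ₂ (g • b) := by rw [← ha, hψ₁', hψ₂']; ring
      _ = g * (s * ψ₂ b) := by rw [map_smul, smul_eq_mul]; ring
  obtain ⟨χ, hχ⟩ := ψ₁.exists_smul_eq_of_forall_dvd hs fun b => hst _ ⟨_, hcross b⟩
  refine ⟨χ, LinearMap.ext fun a => (mul_cancel_left_mem_nonZeroDivisors hs).mp ?_⟩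
  rw [← hψ₁', ← hχ]
  rfl

end

theorem CochainComplex.homology_succ_eq_zero_of_smul_eq_zero {R : Type*} [CommRing R]
    (K : CochainComplex (ModuleCat R) ℕ) (n : ℕ) {s t : R}
    (hK : ∀ z : K.X (n + 1), (∃ x, (K.d n (n + 1)).hom x = s • z) →
      (∃ x, (K.d n (n + 1)).hom x = t • z) → ∃ x, (K.d n (n + 1)).hom x = z)
    {y : K.homology (n + 1)} (hs : s • y = 0) (ht : t • y = 0) : y = 0 := by
  let S := K.sc' n (n + 1) (n + 2)
  let e : K.homology (n + 1) ≅
      ModuleCat.of R (LinearMap.ker S.g.hom ⧸ LinearMap.range S.moduleCatToCycles) :=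
    K.homologyIsoSc' n (n + 1) (n + 2) (by simp) (by simp) ≪≫ S.moduleCatHomologyIso
  suffices h : e.hom y = 0 by simpa using congrArg e.inv.hom h
  obtain ⟨z, hz⟩ := Submodule.Quotient.mk_surjective _ (e.hom y)
  have hcob (r : R) (hr : r • y = 0) : ∃ x, (K.d n (n + 1)).hom x = r • z.val := by
    have : Submodule.Quotient.mk (p := LinearMap.range S.moduleCatToCycles) (r • z) = 0 := by
      rw [Submodule.Quotient.mk_smul, hz, ← map_smul, hr, map_zero]
    obtain ⟨x, hx⟩ := (Submodule.Quotient.mk_eq_zero _).mp this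
    exact ⟨x, congrArg Subtype.val hx⟩
  obtain ⟨x, hx⟩ := hK z.val (hcob s hs) (hcob t ht)
  rw [← hz, Submodule.Quotient.mk_eq_zero]
  exact ⟨x, Subtype.ext hx⟩

theorem CategoryTheory.ProjectiveResolution.exists_smul_mem_range_d_of_isTorsion {R : Type*}
    [CommRing R] {M : ModuleCat R} (P : ProjectiveResolution M) (hM : Module.IsTorsion R M)
    (b : P.complex.X 0) : ∃ g ∈ R⁰, g • b ∈ LinearMap.range (P.complex.d 1 0).hom := by
  obtain ⟨g, hg⟩ := hM (x := (P.π.f 0).hom b)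
  have hπ : (P.π.f 0).hom ((g : R) • b) = 0 := by rw [map_smul]; exact hg
  obtain ⟨a, ha⟩ := (ShortComplex.moduleCat_exact_iff _).mp P.exact₀ _ hπ
  exact ⟨g, g.2, a, ha⟩

theorem ext_one_eq_zero_of_smul_eq_zero {R : Type u} [CommRing R] {M : ModuleCat.{u} R}
    (hM : Module.IsTorsion R M) {s t : R} (hs : s ∈ R⁰) (hst : ∀ f, s ∣ t * f → s ∣ f)
    {y : ((Ext R (ModuleCat.{u} R) 1).obj (Opposite.op M)).obj (ModuleCat.of R R)}
    (hsy : s • y = 0) (hty : t • y = 0) : y = 0 := by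
  let P : ProjectiveResolution M := (HasProjectiveResolution.out (Z := M)).some
  let e := P.isoExt (R := R) 1 (ModuleCat.of R R)
  suffices h : e.hom y = 0 by simpa using congrArg e.inv.hom h
  refine (P.complex.linearYonedaObj R _).homology_succ_eq_zero_of_smul_eq_zero 0 ?_
    (by rw [← map_smul, hsy, map_zero]) (by rw [← map_smul, hty, map_zero])
  intro φ ⟨ψ₁, hψ₁⟩ ⟨ψ₂, hψ₂⟩
  obtain ⟨χ, hχ⟩ := (P.complex.d 1 0).hom.exists_comp_eq_of_smul_comp_eq
    (P.exists_smul_mem_range_d_of_isTorsion hM) hs hst (φ := φ.hom)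
    ⟨ψ₁.hom, congrArg ModuleCat.Hom.hom hψ₁⟩ ⟨ψ₂.hom, congrArg ModuleCat.Hom.hom hψ₂⟩
  exact ⟨ModuleCat.ofHom χ, ModuleCat.hom_ext hχ⟩

theorem stmt4_general (p : ℕ) [Fact p.Prime]
    (M : Type) [AddCommGroup M] [Module (PowerSeries ℤ_[p]) M]
    (hM : Module.IsTorsion (PowerSeries ℤ_[p]) M)
    (N : Submodule (PowerSeries ℤ_[p]) (extIw p 1 (ModuleCat.of _ M)))
    (hN : Finite N) :
    N = ⊥ := by
  have hpC : (p : PowerSeries ℤ_[p]) = C (p : ℤ_[p]) := (map_natCast C p).symm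
  have hp : (p : PowerSeries ℤ_[p]) ∈ nonunits _ := fun h =>
    PadicInt.p_nonunit (by simpa using isUnit_iff_constantCoeff.mp h)
  have hX : (X : PowerSeries ℤ_[p]) ∈ nonunits _ := fun h => by
    simpa using isUnit_iff_constantCoeff.mp h
  refine (Submodule.eq_bot_iff N).mpr fun y hy => ?_
  obtain ⟨k, hk⟩ := exists_pow_smul_eq_zero_of_finite hp (⟨y, hy⟩ : N)
  obtain ⟨m, hm⟩ := exists_pow_smul_eq_zero_of_finite hX (⟨y, hy⟩ : N)
  refine ext_one_eq_zero_of_smul_eq_zero hM ?_ (fun f hf => ?_) (congrArg Subtype.val hk)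
    (congrArg Subtype.val hm)
  · refine pow_mem (mem_nonZeroDivisors_of_ne_zero ?_) k
    rw [hpC]
    exact (map_ne_zero_iff _ C_injective).mpr (Nat.cast_ne_zero.mpr (Fact.out : p.Prime).ne_zero)
  · rw [hpC, ← map_pow] at hf ⊢
    exact C_dvd_of_dvd_X_pow_mul m hf

/-- For `Λ = ℤ_p[[T]]` and `M` a finitely generated torsion `Λ`-module,
`Ext¹_Λ(M, Λ)` has no nonzero finite submodules: every finite submodule is zero. -/
theorem stmt4 (p : ℕ) [Fact p.Prime]
    (M : Type) [AddCommGroup M] [Module (PowerSeries ℤ_[p]) M]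
    [Module.Finite (PowerSeries ℤ_[p]) M]
    (hM : Module.IsTorsion (PowerSeries ℤ_[p]) M)
    (N : Submodule (PowerSeries ℤ_[p]) (extIw p 1 (ModuleCat.of _ M)))
    (hN : Finite N) :
    N = ⊥ :=
  stmt4_general p M hM N hN
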